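/- Solution of the orthogonal Procrustes problem: given matrices X, Y ∈ ℝ^{d×n}, if XYᵀ has singular value decomposition XYᵀ = UΣVᵀ with U, V ∈ O(d) and Σ diagonal with nonnegative entries, then A = UVᵀ minimizes ‖X − AY‖_F² over all orthogonal matrices A ∈ O(d). -/
import Mathlib


open Matrix

lemma procrustes_diag_le_one {d : ℕ} (Z : Matrix (Fin d) (Fin d) ℝ)
    (hZ : Zᵀ * Z = 1) (i : Fin d) : Z i i ≤ 1 := by
  have h : ∑ j, Z j i * Z j i = 1 := by
    have := congrFun (congrFun hZ i) i
    simpa [Matrix.mul_apply, Matrix.transpose_apply, Matrix.one_apply] using this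
  have h2 : Z i i * Z i i ≤ 1 := by
    rw [← h]
    exact Finset.single_le_sum (f := fun j => Z j i * Z j i)
      (fun j _ => mul_self_nonneg _) (Finset.mem_univ i)
  nlinarith [sq_nonneg (Z i i - 1)]

lemma procrustes_trace_le {d : ℕ} (Z : Matrix (Fin d) (Fin d) ℝ)
    (hZ : Zᵀ * Z = 1) (σ : Fin d → ℝ) (hσ : ∀ i, 0 ≤ σ i) :
    Matrix.trace (Z * Matrix.diagonal σ) ≤ Matrix.trace (Matrix.diagonal σ) := by
  simp only [Matrix.trace, Matrix.diag, Matrix.mul_diagonal, Matrix.diagonal_apply_eq]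
  exact Finset.sum_le_sum fun i _ =>
    mul_le_of_le_one_left (hσ i) (procrustes_diag_le_one Z hZ i)

theorem orthogonal_procrustes
    {d n : ℕ}
    (X Y : Matrix (Fin d) (Fin n) ℝ)
    (U V : Matrix (Fin d) (Fin d) ℝ)
    (σ : Fin d → ℝ)
    (hU : Uᵀ * U = 1) (hV : Vᵀ * V = 1)
    (hσ : ∀ i, 0 ≤ σ i)
    (hSVD : X * Yᵀ = U * Matrix.diagonal σ * Vᵀ) :
    ∀ A : Matrix (Fin d) (Fin d) ℝ, Aᵀ * A = 1 →
      Matrix.trace ((X - (U * Vᵀ) * Y)ᵀ * (X - (U * Vᵀ) * Y)) ≤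
        Matrix.trace ((X - A * Y)ᵀ * (X - A * Y)) := by
  intro A hA
  have hVV : V * Vᵀ = 1 := mul_eq_one_comm.mp hV
  have hAA : A * Aᵀ = 1 := mul_eq_one_comm.mp hA
  -- expansion lemma
  have expand : ∀ B : Matrix (Fin d) (Fin d) ℝ, Bᵀ * B = 1 →
      Matrix.trace ((X - B * Y)ᵀ * (X - B * Y)) =
        Matrix.trace (Xᵀ * X) + Matrix.trace (Yᵀ * Y)
          - 2 * Matrix.trace ((Vᵀ * Bᵀ * U) * Matrix.diagonal σ) := by
    intro B hB
    have h1 : (X - B * Y)ᵀ * (X - B * Y)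
        = Xᵀ * X - Xᵀ * (B * Y) - Yᵀ * Bᵀ * X + Yᵀ * Bᵀ * (B * Y) := by
      rw [Matrix.transpose_sub, Matrix.transpose_mul]
      simp only [Matrix.sub_mul, Matrix.mul_sub, Matrix.mul_assoc]
      abel
    have h2 : Yᵀ * Bᵀ * (B * Y) = Yᵀ * Y := by
      rw [Matrix.mul_assoc Yᵀ, ← Matrix.mul_assoc Bᵀ, hB, Matrix.one_mul]
    have h3 : Matrix.trace (Xᵀ * (B * Y)) = Matrix.trace (Yᵀ * Bᵀ * X) := by
      rw [← Matrix.trace_transpose (Yᵀ * Bᵀ * X)]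
      congr 1
      simp [Matrix.transpose_mul, Matrix.mul_assoc]
    have h4 : Matrix.trace (Yᵀ * Bᵀ * X) = Matrix.trace ((Vᵀ * Bᵀ * U) * Matrix.diagonal σ) := by
      calc Matrix.trace (Yᵀ * Bᵀ * X) = Matrix.trace (Yᵀ * (Bᵀ * X)) := by
            rw [Matrix.mul_assoc]
        _ = Matrix.trace ((Bᵀ * X) * Yᵀ) := Matrix.trace_mul_comm _ _
        _ = Matrix.trace (Bᵀ * (U * Matrix.diagonal σ * Vᵀ)) := by
            rw [Matrix.mul_assoc, hSVD]
        _ = Matrix.trace ((Bᵀ * (U * Matrix.diagonal σ)) * Vᵀ) := by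
            rw [← Matrix.mul_assoc, ← Matrix.mul_assoc]
        _ = Matrix.trace (Vᵀ * (Bᵀ * (U * Matrix.diagonal σ))) := Matrix.trace_mul_comm _ _
        _ = Matrix.trace ((Vᵀ * Bᵀ * U) * Matrix.diagonal σ) := by
            rw [← Matrix.mul_assoc, ← Matrix.mul_assoc]
    rw [h1, h2]
    simp only [Matrix.trace_add, Matrix.trace_sub]
    rw [h3, h4]
    ring
  rw [expand A hA, expand (U * Vᵀ) (by
    rw [Matrix.transpose_mul, Matrix.transpose_transpose, Matrix.mul_assoc,
      ← Matrix.mul_assoc Uᵀ, hU, Matrix.one_mul, hVV])]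
  have hW : (Vᵀ * (U * Vᵀ)ᵀ * U) = 1 := by
    rw [Matrix.transpose_mul, Matrix.transpose_transpose, ← Matrix.mul_assoc Vᵀ V Uᵀ,
      hV, Matrix.one_mul, hU]
  have hZ : (Vᵀ * Aᵀ * U)ᵀ * (Vᵀ * Aᵀ * U) = 1 := by
    simp only [Matrix.transpose_mul, Matrix.transpose_transpose]
    calc Uᵀ * (A * V) * (Vᵀ * Aᵀ * U)
        = Uᵀ * (A * (V * Vᵀ) * (Aᵀ * U)) := by
          simp only [Matrix.mul_assoc]
      _ = Uᵀ * ((A * Aᵀ) * U) := by rw [hVV, Matrix.mul_one, ← Matrix.mul_assoc A]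
      _ = 1 := by rw [hAA, Matrix.one_mul, hU]
  have key : Matrix.trace ((Vᵀ * Aᵀ * U) * Matrix.diagonal σ)
      ≤ Matrix.trace ((Vᵀ * (U * Vᵀ)ᵀ * U) * Matrix.diagonal σ) := by
    rw [hW, Matrix.one_mul]
    exact procrustes_trace_le _ hZ σ hσ
  linarith
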